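/- Let p be a prime, r an integer, and let M and N be ℚ_p-vector spaces equipped with additive maps Φ_M: M → M and Φ_N: N → N. Let f: M → N be an injective additive map with f∘Φ_M = Φ_N∘f, and assume that the cokernel of f is annihilated by Φ_N^3, i.e. Φ_N^3(N) ⊆ f(M). Then f induces a bijection between {x ∈ M : Φ_M(x) = p^r·x} and {x ∈ N : Φ_N(x) = p^r·x}, i.e. between the kernels of 1 − Φ_M/p^r on M and of 1 − Φ_N/p^r on N. -/
import Mathlib

lemma stmt10_aux (p : ℕ) [Fact p.Prime] {M N : Type*} [AddCommGroup M] [Module ℚ_[p] M]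
    [AddCommGroup N] [Module ℚ_[p] N] (f : M →+ N) (s : ℤ) (m : M) :
    f ((p : ℚ_[p]) ^ s • m) = (p : ℚ_[p]) ^ s • f m := by
  have hp : (p : ℚ_[p]) ≠ 0 := Nat.cast_ne_zero.2 (Fact.out (p := p.Prime)).pos.ne'
  have hnat : ∀ (k : ℕ) (x : M), f ((p : ℚ_[p]) ^ k • x) = (p : ℚ_[p]) ^ k • f x := by
    intro k x
    rw [show ((p : ℚ_[p]) ^ k) = ((p ^ k : ℕ) : ℚ_[p]) by push_cast; ring,
      Nat.cast_smul_eq_nsmul, Nat.cast_smul_eq_nsmul, map_nsmul]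
  set k : ℕ := s.natAbs with hk
  have hst : ((s + k).toNat : ℤ) = s + k := by
    rw [Int.toNat_of_nonneg]
    omega
  have key : (p : ℚ_[p]) ^ (k : ℕ) • f ((p : ℚ_[p]) ^ s • m)
      = (p : ℚ_[p]) ^ (k : ℕ) • ((p : ℚ_[p]) ^ s • f m) := by
    rw [← hnat k, smul_smul, smul_smul, ← zpow_natCast (p : ℚ_[p]) k, ← zpow_add₀ hp,
      add_comm, ← hst, zpow_natCast, hnat, ← zpow_natCast (p : ℚ_[p]) (s + ↑k).toNat, hst,
      zpow_add₀ hp, mul_comm]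
  exact smul_right_injective N (pow_ne_zero _ hp) key

/-- Let `p` be a prime, `r` an integer, `M`, `N` two `ℚ_p`-vector
spaces equipped with additive maps `ΦM`, `ΦN`, and `f : M → N` an injective additive map
commuting with the Frobenii whose cokernel is annihilated by `ΦN ^ 3`.  Then `f` induces a
bijection between the kernels of `1 − Φ/p^r`, i.e. between the sets of elements with
`Φ x = p^r • x`. -/
theorem stmt10 (p : ℕ) [Fact p.Prime] (r : ℤ)
    {M N : Type*} [AddCommGroup M] [Module ℚ_[p] M] [AddCommGroup N] [Module ℚ_[p] N]
    (ΦM : M →+ M) (ΦN : N →+ N)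
    (f : M →+ N) (hfinj : Function.Injective f)
    (hcomm : ∀ m : M, f (ΦM m) = ΦN (f m))
    (hcoker : ∀ y : N, ΦN (ΦN (ΦN y)) ∈ Set.range f) :
    Set.BijOn f {m : M | ΦM m = ((p : ℚ_[p]) ^ r) • m} {y : N | ΦN y = ((p : ℚ_[p]) ^ r) • y} := by
  have hp : (p : ℚ_[p]) ≠ 0 := Nat.cast_ne_zero.2 (Fact.out (p := p.Prime)).pos.ne'
  refine ⟨?_, fun a _ b _ hab => hfinj hab, ?_⟩
  · intro m hm
    simp only [Set.mem_setOf_eq] at hm ⊢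
    rw [← hcomm, hm, stmt10_aux]
  · intro y hy
    simp only [Set.mem_setOf_eq] at hy
    obtain ⟨m₀, hm₀⟩ := hcoker y
    have h2 : ΦN (ΦN y) = (p : ℚ_[p]) ^ r • (p : ℚ_[p]) ^ r • y := by
      conv_lhs => rw [hy]
      rw [stmt10_aux p ΦN, hy]
    have h3 : f m₀ = (p : ℚ_[p]) ^ (3 * r) • y := by
      rw [hm₀]
      conv_lhs => rw [h2]
      rw [stmt10_aux p ΦN, stmt10_aux p ΦN, hy, smul_smul, smul_smul,
        ← zpow_add₀ hp, ← zpow_add₀ hp, show r + r + r = 3 * r by ring]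
    set m : M := (p : ℚ_[p]) ^ (-(3 * r)) • m₀ with hm
    have hfm : f m = y := by
      rw [hm, stmt10_aux, h3, smul_smul, ← zpow_add₀ hp, neg_add_cancel, zpow_zero, one_smul]
    refine ⟨m, ?_, hfm⟩
    simp only [Set.mem_setOf_eq]
    apply hfinj
    rw [hcomm, hfm, hy, stmt10_aux, hfm]
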